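/- arXiv:1604.01176 — 11 statements merged into one kernel-verified Lean document; each statement's English description precedes it below -/
import Mathlib

section
/- If a commutative unital ring R has unitary M-stable rank n < ∞, then for every m ≥ n and every invertible (m+1)-tuple (f, g) ∈ R^{m+1}, there exists an invertible m-tuple u ∈ U_m(R) such that f + u·g (componentwise f_j + u_j g) is an invertible m-tuple. -/
/-!
Unitary stable rank `≤ n` implies Bass stable rank `≤ n`, and Bass stable rank only grows upwards,
so for `m = k + 1 > n` the ring has stable rank `≤ k`. Given a unimodular `(f, g) ∈ R^{k+2}`,
take `u = (u', 1)`, which is unimodular whatever `u'` is. The last entry of `f + u g` is then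
`f_last + g`, and the tuple `(f', g, f_last + g)` is unimodular, so the relative form of stable
rank `≤ k` (reducing `(f', g)` modulo the ideal generated by `f_last + g`) produces `u'`.
-/

/-- `sr R ≤ k`: every unimodular `(k+1)`-tuple `(a, b)` is reducible to a unimodular `k`-tuple
`a + u b`. -/
def StableRankLE (R : Type*) [CommRing R] (k : ℕ) : Prop :=
  ∀ (a : Fin k → R) (b : R), (∃ (x : Fin k → R) (y : R), ∑ j, x j * a j + y * b = 1) →
    ∃ (u z : Fin k → R), ∑ j, z j * (a j + u j * b) = 1

/-- `usr R ≤ k`: as `sr R ≤ k`, with the additional requirement that `u` be unimodular. -/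
def UnitaryStableRankLE (R : Type*) [CommRing R] (k : ℕ) : Prop :=
  ∀ (a : Fin k → R) (b : R), (∃ (x : Fin k → R) (y : R), ∑ j, x j * a j + y * b = 1) →
    ∃ u : Fin k → R, (∃ w : Fin k → R, ∑ j, w j * u j = 1) ∧
      (∃ x : Fin k → R, ∑ j, x j * (a j + u j * b) = 1)

section

variable {R : Type*} [CommRing R] {k : ℕ}

theorem UnitaryStableRankLE.stableRankLE (h : UnitaryStableRankLE R k) : StableRankLE R k :=
  fun a b hab => by
    obtain ⟨u, -, z, hz⟩ := h a b hab
    exact ⟨u, z, hz⟩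

namespace StableRankLE

theorem succ (h : StableRankLE R k) : StableRankLE R (k + 1) := by
  rintro a b ⟨x, y, hxy⟩
  rw [Fin.sum_univ_castSucc] at hxy
  -- reduce the unimodular `(a', x_last a_last + y b)` of length `k + 1`
  obtain ⟨e, z, hez⟩ := h (fun j => a j.castSucc)
      (x (Fin.last k) * a (Fin.last k) + y * b)
    ⟨fun j => x j.castSucc, 1, by linear_combination hxy⟩
  have hez' : (∑ j, z j * (a j.castSucc + e j * y * b))
      + (∑ j, z j * e j) * (x (Fin.last k) * a (Fin.last k)) = 1 := by
    rw [Finset.sum_mul, ← Finset.sum_add_distrib, ← hez]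
    exact Finset.sum_congr rfl fun j _ => by ring
  refine ⟨Fin.snoc (fun j => e j * y) 0,
    Fin.snoc z (x (Fin.last k) * ∑ j, z j * e j), ?_⟩
  rw [Fin.sum_univ_castSucc]
  simp only [Fin.snoc_castSucc, Fin.snoc_last]
  linear_combination hez'

theorem add (h : StableRankLE R k) (d : ℕ) : StableRankLE R (k + d) := by
  induction d with
  | zero => exact h
  | succ d ih => exact ih.succ

/-- The relative form: a tuple `(a, b)` that is unimodular modulo `c` can be reduced
modulo `c`. -/
theorem exists_reduction_mod (hk : StableRankLE R k) (c : R) (a : Fin k → R) (b : R)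
    (hab : ∃ (x : Fin k → R) (y t : R), ∑ j, x j * a j + y * b + t * c = 1) :
    ∃ (u z : Fin k → R) (t : R), ∑ j, z j * (a j + u j * b) + t * c = 1 := by
  obtain ⟨x, y, t, hx⟩ := hab
  -- first reduce `(a, b, c)` to `(a + U' c, b + U_last c)`, then reduce that `(k+1)`-tuple
  obtain ⟨U, Z, hUZ⟩ := hk.succ (Fin.snoc a b) c
    ⟨Fin.snoc x y, t, by
      rw [Fin.sum_univ_castSucc]
      simp only [Fin.snoc_castSucc, Fin.snoc_last]
      linear_combination hx⟩
  rw [Fin.sum_univ_castSucc] at hUZ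
  simp only [Fin.snoc_castSucc, Fin.snoc_last] at hUZ
  obtain ⟨u, z, huz⟩ := hk (fun j => a j + U j.castSucc * c) (b + U (Fin.last k) * c)
    ⟨fun j => Z j.castSucc, Z (Fin.last k), by linear_combination hUZ⟩
  refine ⟨u, z, ∑ j, z j * (U j.castSucc + u j * U (Fin.last k)), ?_⟩
  rw [Finset.sum_mul, ← Finset.sum_add_distrib, ← huz]
  exact Finset.sum_congr rfl fun j _ => by ring

theorem unitaryStableRankLE_succ (hk : StableRankLE R k) :
    UnitaryStableRankLE R (k + 1) := by
  rintro f g ⟨x, y, hxy⟩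
  rw [Fin.sum_univ_castSucc] at hxy
  obtain ⟨u, z, t, huz⟩ := hk.exists_reduction_mod (f (Fin.last k) + g)
    (fun j => f j.castSucc) g
    ⟨fun j => x j.castSucc, y - x (Fin.last k), x (Fin.last k), by linear_combination hxy⟩
  refine ⟨Fin.snoc u 1, ⟨Fin.snoc 0 1, ?_⟩, ⟨Fin.snoc z t, ?_⟩⟩
  · simp [Fin.sum_univ_castSucc]
  · rw [Fin.sum_univ_castSucc]
    simp only [Fin.snoc_castSucc, Fin.snoc_last]
    linear_combination huz

end StableRankLE

end

/-- If a commutative unital ring `R` has unitary M-stable rank `n`, then for every `m ≥ n`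
and every invertible `(m+1)`-tuple `(f, g)`, there is an invertible `m`-tuple `u` with
`f + u·g` invertible. -/
theorem stmt1 (R : Type*) [CommRing R] (n : ℕ)
    (husr : ∀ (a : Fin n → R) (b : R),
      (∃ (x : Fin n → R) (y : R), ∑ j, x j * a j + y * b = 1) →
      ∃ u : Fin n → R, (∃ w : Fin n → R, ∑ j, w j * u j = 1) ∧
        (∃ x : Fin n → R, ∑ j, x j * (a j + u j * b) = 1))
    (m : ℕ) (hm : n ≤ m) (f : Fin m → R) (g : R)
    (hfg : ∃ (x : Fin m → R) (y : R), ∑ j, x j * f j + y * g = 1) :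
    ∃ u : Fin m → R, (∃ w : Fin m → R, ∑ j, w j * u j = 1) ∧
      (∃ x : Fin m → R, ∑ j, x j * (f j + u j * g) = 1) := by
  have husr' : UnitaryStableRankLE R n := husr
  rcases hm.eq_or_lt with rfl | hlt
  · exact husr' f g hfg
  · obtain ⟨d, rfl⟩ := Nat.exists_eq_add_of_lt hlt
    exact (husr'.stableRankLE.add d).unitaryStableRankLE_succ f g hfg
end

section
/- For any commutative unital ring R, the unitary M-stable rank satisfies bsr R ≤ usr R ≤ bsr R + 1, where bsr denotes the Bass stable rank. -/
/-- An `n`-tuple over a commutative ring is unimodular (invertible) if it generates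
the unit ideal. -/
def IsUnimodular {R : Type*} [CommRing R] {n : ℕ} (f : Fin n → R) : Prop :=
  ∃ x : Fin n → R, ∑ j, x j * f j = 1

/-- The defining property of Bass stable rank at level `n`. -/
def BsrProp (R : Type*) [CommRing R] (n : ℕ) : Prop :=
  ∀ (f : Fin n → R) (g : R), IsUnimodular (Fin.snoc f g) →
    ∃ x : Fin n → R, IsUnimodular (fun j => f j + x j * g)

/-- The defining property of the unitary M-stable rank at level `n`: the reducing tuple
can be chosen unimodular. -/
def UsrProp (R : Type*) [CommRing R] (n : ℕ) : Prop :=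
  ∀ (f : Fin n → R) (g : R), IsUnimodular (Fin.snoc f g) →
    ∃ u : Fin n → R, IsUnimodular u ∧ IsUnimodular (fun j => f j + u j * g)

/-- The Bass stable rank of `R` (as an extended natural number). -/
noncomputable def bsr (R : Type*) [CommRing R] : ℕ∞ :=
  sInf {c : ℕ∞ | ∃ n : ℕ, c = n ∧ BsrProp R n}

/-- The unitary M-stable rank of `R` (as an extended natural number). -/
noncomputable def usr (R : Type*) [CommRing R] : ℕ∞ :=
  sInf {c : ℕ∞ | ∃ n : ℕ, c = n ∧ UsrProp R n}

/-!
Unimodularity of a row only depends on the ideal its entries generate, so each row below is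
shown to be unimodular by writing the entries of a known unimodular row in terms of its own.

Stable rank is monotone: if `∑ xᵢ fᵢ + y g = 1`, reducing `(f₀, …, fₙ₋₁, xₙ fₙ + y g)` along its
last entry by `c` shows that `(cᵢ y, 0)` reduces `(f₀, …, fₙ, g)`.

For `usr R ≤ bsr R + 1`, reduce a unimodular row `(f₀, …, fₙ, g)` by `u = (e₀, …, eₙ₋₁, 1)`, which
is unimodular because of its last entry, so that the last entry becomes `k = fₙ + g`. Stable rank
`n + 1` reduces the unimodular row `(f₀, …, fₙ₋₁, g, k)` along `k` to `(fᵢ + cᵢ k, g + cₙ k)`, and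
stable rank `n` reduces this along its last entry to `(fᵢ + eᵢ g + (cᵢ + eᵢ cₙ) k)ᵢ`, whose
entries lie in the ideal generated by `(fᵢ + eᵢ g)ᵢ` and `k`.
-/

open Ideal

section

variable {R : Type*} [CommRing R]

theorem isUnimodular_iff_span_eq_top {n : ℕ} {f : Fin n → R} :
    IsUnimodular f ↔ span (Set.range f) = ⊤ := by
  rw [eq_top_iff_one, mem_span_range_iff_exists_fun]
  rfl

theorem IsUnimodular.of_forall_mem_span {m n : ℕ} {a : Fin m → R} {b : Fin n → R}
    (ha : IsUnimodular a) (hab : ∀ i, a i ∈ span (Set.range b)) : IsUnimodular b := by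
  rw [isUnimodular_iff_span_eq_top, eq_top_iff] at ha ⊢
  exact ha.trans (span_le.mpr (Set.range_subset_iff.mpr hab))

theorem isUnimodular_of_eq_one {n : ℕ} {f : Fin n → R} (i : Fin n) (hi : f i = 1) :
    IsUnimodular f :=
  isUnimodular_iff_span_eq_top.mpr <|
    (eq_top_iff_one _).mpr (hi ▸ mem_span_range_self)

theorem isUnimodular_snoc_iff {n : ℕ} {f : Fin n → R} {g : R} :
    IsUnimodular (Fin.snoc f g) ↔ ∃ (x : Fin n → R) (y : R), ∑ i, x i * f i + y * g = 1 := by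
  constructor
  · rintro ⟨x, hx⟩
    refine ⟨Fin.init x, x (Fin.last n), ?_⟩
    simpa [Fin.sum_univ_castSucc, Fin.init] using hx
  · rintro ⟨x, y, hxy⟩
    refine ⟨Fin.snoc x y, ?_⟩
    simpa [Fin.sum_univ_castSucc] using hxy

theorem UsrProp.bsrProp {n : ℕ} (h : UsrProp R n) : BsrProp R n := fun f g hfg =>
  let ⟨u, _, hu⟩ := h f g hfg
  ⟨u, hu⟩

theorem BsrProp.succ {n : ℕ} (h : BsrProp R n) : BsrProp R (n + 1) := by
  intro f g hfg
  obtain ⟨x, y, hxy⟩ := isUnimodular_snoc_iff.mp hfg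
  rw [Fin.sum_univ_castSucc] at hxy
  set g' := x (Fin.last n) * f (Fin.last n) + y * g
  have hg' : IsUnimodular (Fin.snoc (Fin.init f) g') :=
    isUnimodular_snoc_iff.mpr ⟨Fin.init x, 1, by simp only [Fin.init]; linear_combination hxy⟩
  obtain ⟨c, hc⟩ := h _ _ hg'
  set w : Fin (n + 1) → R := Fin.snoc (fun i => c i * y) 0
  refine ⟨w, hc.of_forall_mem_span fun i => ?_⟩
  convert add_mem (mem_span_range_self (x := i.castSucc))
    (mul_mem_left _ (c i * x (Fin.last n)) (mem_span_range_self (x := Fin.last n))) using 1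
  simp only [w, g', Fin.init, Fin.snoc_castSucc, Fin.snoc_last]
  ring

theorem BsrProp.usrProp_succ {n : ℕ} (h : BsrProp R n) : UsrProp R (n + 1) := by
  intro f g hfg
  set k := f (Fin.last n) + g
  set q : Fin (n + 2) → R := Fin.snoc (Fin.snoc (Fin.init f) g) k
  have hq : IsUnimodular q := by
    refine hfg.of_forall_mem_span fun j => ?_
    have hg : g ∈ span (Set.range q) := by
      simpa [q] using mem_span_range_self (f := q) (x := (Fin.last n).castSucc)
    have hk : k ∈ span (Set.range q) := by
      simpa [q] using mem_span_range_self (f := q) (x := Fin.last (n + 1))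
    refine Fin.lastCases ?_ (fun j => Fin.lastCases ?_ (fun i => ?_) j) j
    · simpa using hg
    · simpa [k] using sub_mem hk hg
    · simpa [q, Fin.init] using mem_span_range_self (f := q) (x := i.castSucc.castSucc)
  obtain ⟨c, hc⟩ := h.succ _ _ hq
  rw [← Fin.snoc_init_self fun j => _ + c j * k] at hc
  obtain ⟨e, he⟩ := h _ _ hc
  set u : Fin (n + 1) → R := Fin.snoc e 1
  refine ⟨u, isUnimodular_of_eq_one (Fin.last n) (by simp [u]), he.of_forall_mem_span fun i => ?_⟩
  convert add_mem (mem_span_range_self (x := i.castSucc)) (mul_mem_left _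
    (c i.castSucc + e i * c (Fin.last n)) (mem_span_range_self (x := Fin.last n))) using 1
  simp only [u, k, Fin.init, Fin.snoc_castSucc, Fin.snoc_last]
  ring

theorem bsr_le_usr : bsr R ≤ usr R :=
  sInf_le_sInf fun _ ⟨n, hc, hn⟩ => ⟨n, hc, hn.bsrProp⟩

theorem usr_le_of_bsrProp {n : ℕ} (h : BsrProp R n) : usr R ≤ n + 1 :=
  sInf_le ⟨n + 1, by push_cast; rfl, h.usrProp_succ⟩

theorem usr_le_bsr_add_one : usr R ≤ bsr R + 1 :=
  tsub_le_iff_right.mp <| le_sInf fun _ ⟨_, hc, hn⟩ =>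
    hc ▸ tsub_le_iff_right.mpr (usr_le_of_bsrProp hn)

end

/-- `bsr R ≤ usr R ≤ bsr R + 1`. -/
theorem stmt2 (R : Type*) [CommRing R] : bsr R ≤ usr R ∧ usr R ≤ bsr R + 1 :=
  ⟨bsr_le_usr, usr_le_bsr_add_one⟩
end

section
/- Let A be a normed commutative unital algebra whose group of units is open and has continuous inversion (a normed cQ-algebra). If the norm-one rank of A is n < ∞, then the small-norm rank of A is at most n: for every ε > 0 and every invertible (n+1)-tuple (a, g) ∈ Aⁿ × A, there exists x ∈ Aⁿ with ‖x_j‖ < ε for all j such that a + x·g ∈ U_n(A). -/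
/-! Scaling `g` by a nonzero scalar `t` does not affect the unimodularity of `(a, g)`, and
`a + c (t g) = a + (t c) g`; so the norm-one rank applied to `(a, t g)` yields a correction of
norm exactly `‖t‖`, which can be chosen below any `ε > 0`. -/

theorem exists_sum_mul_add_mul_smul_eq_one {𝕜 A ι : Type*} [Field 𝕜] [CommRing A] [Algebra 𝕜 A]
    [Fintype ι] {f : ι → A} {g : A} {t : 𝕜} (ht : t ≠ 0)
    (h : ∃ (x : ι → A) (y : A), ∑ j, x j * f j + y * g = 1) :
    ∃ (x : ι → A) (y : A), ∑ j, x j * f j + y * (t • g) = 1 := by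
  obtain ⟨x, y, hxy⟩ := h
  refine ⟨x, t⁻¹ • y, ?_⟩
  rwa [mul_smul_comm, smul_mul_assoc, smul_smul, mul_inv_cancel₀ ht, one_smul]

theorem exists_norm_eq_of_norm_one_rank {𝕜 A ι : Type*} [NormedField 𝕜] [NormedCommRing A]
    [NormedAlgebra 𝕜 A] [Fintype ι]
    (hnor : ∀ (f : ι → A) (g : A),
      (∃ (x : ι → A) (y : A), ∑ j, x j * f j + y * g = 1) →
      ∃ c : ι → A, (∀ j, ‖c j‖ = 1) ∧
        ∃ x : ι → A, ∑ j, x j * (f j + c j * g) = 1)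
    {t : 𝕜} (ht : t ≠ 0) {a : ι → A} {g : A}
    (hag : ∃ (x : ι → A) (y : A), ∑ j, x j * a j + y * g = 1) :
    ∃ x : ι → A, (∀ j, ‖x j‖ = ‖t‖) ∧
      ∃ y : ι → A, ∑ j, y j * (a j + x j * g) = 1 := by
  obtain ⟨c, hc, y, hy⟩ := hnor a (t • g) (exists_sum_mul_add_mul_smul_eq_one ht hag)
  refine ⟨fun j => t • c j, fun j => by rw [norm_smul, hc j, mul_one], y, ?_⟩
  simpa only [smul_mul_assoc, mul_smul_comm] using hy

theorem stmt4_general (𝕜 : Type*) [RCLike 𝕜] (A : Type*) [NormedCommRing A] [NormedAlgebra 𝕜 A]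
    (n : ℕ)
    (hnor : ∀ (f : Fin n → A) (g : A),
      (∃ (x : Fin n → A) (y : A), ∑ j, x j * f j + y * g = 1) →
      ∃ c : Fin n → A, (∀ j, ‖c j‖ = 1) ∧
        ∃ x : Fin n → A, ∑ j, x j * (f j + c j * g) = 1)
    (ε : ℝ) (hε : 0 < ε) (a : Fin n → A) (g : A)
    (hag : ∃ (x : Fin n → A) (y : A), ∑ j, x j * a j + y * g = 1) :
    ∃ x : Fin n → A, (∀ j, ‖x j‖ < ε) ∧
      ∃ y : Fin n → A, ∑ j, y j * (a j + x j * g) = 1 := by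
  have ht : ((ε / 2 : ℝ) : 𝕜) ≠ 0 := by
    rw [ne_eq, RCLike.ofReal_eq_zero]
    positivity
  obtain ⟨x, hx, y, hy⟩ := exists_norm_eq_of_norm_one_rank hnor ht hag
  refine ⟨x, fun j => ?_, y, hy⟩
  rw [hx j, RCLike.norm_ofReal, abs_of_pos (half_pos hε)]
  exact half_lt_self hε

/-- For a normed commutative unital cQ-algebra `A` (open unit group, continuous inversion):
if `A` has norm-one rank `n`, then its small-norm rank is at most `n`. -/
theorem stmt4 (𝕜 : Type*) [RCLike 𝕜] (A : Type*) [NormedCommRing A] [NormedAlgebra 𝕜 A]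
    (hQ : IsOpen {a : A | IsUnit a})
    (hinv : ContinuousOn (fun a : A => Ring.inverse a) {a : A | IsUnit a})
    (n : ℕ)
    (hnor : ∀ (f : Fin n → A) (g : A),
      (∃ (x : Fin n → A) (y : A), ∑ j, x j * f j + y * g = 1) →
      ∃ c : Fin n → A, (∀ j, ‖c j‖ = 1) ∧
        ∃ x : Fin n → A, ∑ j, x j * (f j + c j * g) = 1)
    (ε : ℝ) (hε : 0 < ε) (a : Fin n → A) (g : A)
    (hag : ∃ (x : Fin n → A) (y : A), ∑ j, x j * a j + y * g = 1) :
    ∃ x : Fin n → A, (∀ j, ‖x j‖ < ε) ∧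
      ∃ y : Fin n → A, ∑ j, y j * (a j + x j * g) = 1 :=
  stmt4_general 𝕜 A n hnor ε hε a g hag
end

section
/- Let A be a normed commutative unital algebra with open unit group (a normed Q-algebra). If the small-norm rank of A is n < ∞, then the all-units rank of A is at most n: every invertible (n+1)-tuple (f, g) ∈ Aⁿ × A admits invertible elements u₁, ..., uₙ ∈ A⁻¹ such that (f₁ + u₁g, ..., fₙ + uₙg) ∈ U_n(A). -/
/-!
Apply the small-norm property to the unimodular tuple `(f + g, g)` with `ε` so small that the
`ε`-ball around `1` consists of units: it yields small `x` with `f + (1 + x)·g` unimodular, and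
each `1 + xⱼ` is a unit.
-/

open Finset

theorem exists_sum_mul_add_mul_eq_one_shift {R : Type*} [CommRing R] {n : ℕ}
    {f : Fin n → R} {g : R} (c : Fin n → R)
    (h : ∃ (x : Fin n → R) (y : R), ∑ j, x j * f j + y * g = 1) :
    ∃ (x : Fin n → R) (y : R), ∑ j, x j * (f j + c j * g) + y * g = 1 := by
  obtain ⟨x, y, hxy⟩ := h
  refine ⟨x, y - ∑ j, x j * c j, ?_⟩
  calc ∑ j, x j * (f j + c j * g) + (y - ∑ j, x j * c j) * g
      = ∑ j, x j * f j + y * g := by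
        simp only [mul_add, sum_add_distrib, sub_mul, sum_mul, mul_assoc]
        ring
    _ = 1 := hxy

theorem exists_pos_forall_norm_lt_isUnit_one_add {A : Type*} [NormedRing A]
    (hA : IsOpen {a : A | IsUnit a}) :
    ∃ ε > 0, ∀ a : A, ‖a‖ < ε → IsUnit (1 + a) := by
  obtain ⟨ε, hε, hball⟩ := Metric.isOpen_iff.mp hA 1 isUnit_one
  refine ⟨ε, hε, fun a ha => hball ?_⟩
  simpa [Metric.mem_ball, dist_eq_norm] using ha

theorem stmt5_general (A : Type*) [NormedCommRing A]
    (hQ : IsOpen {a : A | IsUnit a})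
    (n : ℕ)
    (hsnr : ∀ (ε : ℝ), 0 < ε → ∀ (f : Fin n → A) (g : A),
      (∃ (x : Fin n → A) (y : A), ∑ j, x j * f j + y * g = 1) →
      ∃ x : Fin n → A, (∀ j, ‖x j‖ < ε) ∧
        ∃ y : Fin n → A, ∑ j, y j * (f j + x j * g) = 1)
    (f : Fin n → A) (g : A)
    (hfg : ∃ (x : Fin n → A) (y : A), ∑ j, x j * f j + y * g = 1) :
    ∃ u : Fin n → A, (∀ j, IsUnit (u j)) ∧
      ∃ y : Fin n → A, ∑ j, y j * (f j + u j * g) = 1 := by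
  obtain ⟨ε, hε, hunit⟩ := exists_pos_forall_norm_lt_isUnit_one_add hQ
  have hshift := exists_sum_mul_add_mul_eq_one_shift (fun _ => 1) hfg
  simp only [one_mul] at hshift
  obtain ⟨x, hx, y, hy⟩ := hsnr ε hε (fun j => f j + g) g hshift
  refine ⟨fun j => 1 + x j, fun j => hunit _ (hx j), y, ?_⟩
  calc ∑ j, y j * (f j + (1 + x j) * g)
      = ∑ j, y j * (f j + g + x j * g) := sum_congr rfl fun j _ => by ring
    _ = 1 := hy

/-- For a normed commutative unital Q-algebra `A` (open unit group): if `A` has small-norm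
rank `n`, then its all-units rank is at most `n`: every invertible `(n+1)`-tuple `(f, g)`
admits units `u₁, …, uₙ ∈ A⁻¹` with `f + u·g` unimodular. -/
theorem stmt5 (𝕜 : Type*) [RCLike 𝕜] (A : Type*) [NormedCommRing A] [NormedAlgebra 𝕜 A]
    (hQ : IsOpen {a : A | IsUnit a})
    (n : ℕ)
    (hsnr : ∀ (ε : ℝ), 0 < ε → ∀ (f : Fin n → A) (g : A),
      (∃ (x : Fin n → A) (y : A), ∑ j, x j * f j + y * g = 1) →
      ∃ x : Fin n → A, (∀ j, ‖x j‖ < ε) ∧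
        ∃ y : Fin n → A, ∑ j, y j * (f j + x j * g) = 1)
    (f : Fin n → A) (g : A)
    (hfg : ∃ (x : Fin n → A) (y : A), ∑ j, x j * f j + y * g = 1) :
    ∃ u : Fin n → A, (∀ j, IsUnit (u j)) ∧
      ∃ y : Fin n → A, ∑ j, y j * (f j + u j * g) = 1 :=
  stmt5_general A hQ n hsnr f g hfg
end

section
/- Let X be a compact Hausdorff space and A = C(X, 𝕂) with 𝕂 = ℝ or ℂ. If tsr A = 1 (i.e., invertible elements are dense in A), then for every pair (f, g) ∈ A² with no common zero, there exists c ∈ A with ‖c‖_∞ = 1 such that f + c·g has no zero on X. -/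
/-!
If `g` has no zero, then `f + c * g = (c - h) * g` with `h = -f / g`, so one needs `c` of norm one
with `c - h` invertible: approximate `-h` within distance `1` by an invertible `v`, and move along
`h + t • v`, `t ≥ 1`, until the norm is exactly `1`.

If `g (x₀) = 0`, density first gives `c₀` with `‖c₀‖ ≤ 1` and `f + c₀ * g` invertible. Pushing
`c₀` to `1` by a Urysohn function supported where `‖g‖` is small compared with `min ‖f + c₀ * g‖`
keeps `f + c * g` invertible and makes `‖c‖ = 1`, since `c (x₀) = 1`.
-/

open Set ComplexConjugate

lemma add_ne_zero_of_norm_lt {E : Type*} [SeminormedAddCommGroup E] {a b : E} (h : ‖b‖ < ‖a‖) :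
    a + b ≠ 0 := by
  intro hab
  rw [eq_neg_of_add_eq_zero_left hab, norm_neg] at h
  exact h.false

lemma exists_pos_forall_le_of_forall_pos {X : Type*} [TopologicalSpace X] [CompactSpace X]
    {φ : X → ℝ} (hφ : Continuous φ) (hpos : ∀ x, 0 < φ x) : ∃ m > 0, ∀ x, m ≤ φ x := by
  obtain ⟨m, hm, hle⟩ := isCompact_univ.exists_forall_le' hφ.continuousOn fun x _ => hpos x
  exact ⟨m, hm, fun x => hle x (mem_univ x)⟩

lemma exists_one_le_norm_add_smul_eq_one {E : Type*} [NormedAddCommGroup E] [NormedSpace ℝ E]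
    {h w : E} (hw : w ≠ 0) (hhw : ‖h + w‖ ≤ 1) : ∃ t : ℝ, 1 ≤ t ∧ ‖h + t • w‖ = 1 := by
  set T := max 1 ((1 + ‖h‖) / ‖w‖)
  have hT : 1 ≤ T := le_max_left _ _
  have hwpos : 0 < ‖w‖ := norm_pos_iff.2 hw
  have hTw : 1 + ‖h‖ ≤ T * ‖w‖ := (div_le_iff₀ hwpos).1 (le_max_right _ _)
  have hlarge : 1 ≤ ‖h + T • w‖ := by
    have := norm_sub_norm_le (T • w) (-h)
    rw [norm_smul, Real.norm_of_nonneg (by linarith), norm_neg, sub_neg_eq_add, add_comm] at this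
    linarith
  have hcont : ContinuousOn (fun t : ℝ => ‖h + t • w‖) (Icc 1 T) := by fun_prop
  obtain ⟨t, ht, ht1⟩ := intermediate_value_Icc hT hcont ⟨by simpa using hhw, hlarge⟩
  exact ⟨t, ht.1, ht1⟩

section

variable {𝕜 : Type*} [RCLike 𝕜] {X : Type*} [TopologicalSpace X] [CompactSpace X]

lemma exists_norm_eq_one_forall_apply_ne [Nonempty X]
    (htsr : Dense {h : C(X, 𝕜) | ∀ x : X, h x ≠ 0}) (h : C(X, 𝕜)) :
    ∃ c : C(X, 𝕜), ‖c‖ = 1 ∧ ∀ x, c x ≠ h x := by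
  obtain ⟨v, hv, hvh⟩ := htsr.exists_dist_lt (-h) one_pos
  have hv0 : v ≠ 0 := fun hv0 => hv (Classical.arbitrary X) (by simp [hv0])
  have hhv : ‖h + v‖ ≤ 1 := by
    rw [dist_eq_norm, ← norm_neg] at hvh
    simpa [add_comm] using hvh.le
  obtain ⟨t, ht, htv⟩ := exists_one_le_norm_add_smul_eq_one hv0 hhv
  refine ⟨h + t • v, htv, fun x hx => ?_⟩
  have : t • v x = 0 := by simpa using hx
  exact hv x ((smul_eq_zero.1 this).resolve_left (by linarith))

lemma exists_norm_eq_one_forall_add_mul_ne_zero_of_forall_ne_zero [Nonempty X]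
    (htsr : Dense {h : C(X, 𝕜) | ∀ x : X, h x ≠ 0}) (f : C(X, 𝕜)) {g : C(X, 𝕜)}
    (hg : ∀ x, g x ≠ 0) : ∃ c : C(X, 𝕜), ‖c‖ = 1 ∧ ∀ x, f x + c x * g x ≠ 0 := by
  let h : C(X, 𝕜) := ⟨fun x => -f x / g x, f.continuous.neg.div g.continuous hg⟩
  obtain ⟨c, hc, hch⟩ := exists_norm_eq_one_forall_apply_ne htsr h
  refine ⟨c, hc, fun x => ?_⟩
  have hfc : f x + c x * g x = (c x - h x) * g x := by
    simp only [h, ContinuousMap.coe_mk]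
    field_simp [hg x]
    ring
  rw [hfc]
  exact mul_ne_zero (sub_ne_zero.2 (hch x)) (hg x)

/-- Here `c₀ * g = θ • (u - f)` for a nearby unit `u` and a weight `θ = ‖g‖² / max ‖g‖ d ²` in
`[0, 1]` that equals `1` where `‖g‖ ≥ d`, and `d` bounds `max ‖f‖ ‖g‖` from below. -/
lemma exists_norm_le_one_forall_add_mul_ne_zero
    (htsr : Dense {h : C(X, 𝕜) | ∀ x : X, h x ≠ 0}) {f g : C(X, 𝕜)}
    (hfg : ∀ x, f x ≠ 0 ∨ g x ≠ 0) : ∃ c₀ : C(X, 𝕜), ‖c₀‖ ≤ 1 ∧ ∀ x, f x + c₀ x * g x ≠ 0 := by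
  obtain ⟨d, hd, hdfg⟩ := exists_pos_forall_le_of_forall_pos (φ := fun x => max ‖f x‖ ‖g x‖)
    (by fun_prop) fun x => (hfg x).elim (fun h => lt_max_of_lt_left (norm_pos_iff.2 h))
      (fun h => lt_max_of_lt_right (norm_pos_iff.2 h))
  obtain ⟨u, hu, huf⟩ := htsr.exists_dist_lt f hd
  have huf' : ∀ x, ‖u x - f x‖ < d := fun x =>
    ((u - f).norm_coe_le_norm x).trans_lt (by rwa [dist_comm, dist_eq_norm] at huf)
  set M : X → ℝ := fun x => max ‖g x‖ d
  have hM : ∀ x, 0 < M x := fun x => lt_max_of_lt_right hd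
  let c₀ : C(X, 𝕜) := ⟨fun x => (u x - f x) * conj (g x) / ((M x : ℝ) : 𝕜) ^ 2, by
    refine .div ((u.continuous.sub f.continuous).mul (RCLike.continuous_conj.comp g.continuous))
      (by fun_prop) fun x => ?_
    exact pow_ne_zero 2 (RCLike.ofReal_ne_zero.2 (hM x).ne')⟩
  have hgM : ∀ x, ‖g x‖ ≤ M x := fun x => le_max_left _ _
  have hθ : ∀ x, ‖g x‖ ^ 2 / M x ^ 2 ≤ 1 := fun x =>
    div_le_one_of_le₀ (pow_le_pow_left₀ (norm_nonneg _) (hgM x) 2) (sq_nonneg _)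
  have hc₀g : ∀ x, c₀ x * g x = ((‖g x‖ ^ 2 / M x ^ 2 : ℝ) : 𝕜) * (u x - f x) := by
    intro x
    simp only [c₀, ContinuousMap.coe_mk, mul_div_right_comm, mul_assoc, RCLike.conj_mul]
    push_cast
    ring
  refine ⟨c₀, (ContinuousMap.norm_le _ zero_le_one).2 fun x => ?_, fun x => ?_⟩
  · have hc₀x : ‖c₀ x‖ = ‖u x - f x‖ * ‖g x‖ / M x ^ 2 := by
      simp [c₀, norm_div, abs_of_pos (hM x)]
    rw [hc₀x, div_le_one (pow_pos (hM x) 2), sq]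
    exact mul_le_mul ((huf' x).le.trans (le_max_right _ _)) (hgM x) (norm_nonneg _) (hM x).le
  · rw [hc₀g]
    rcases le_or_gt d ‖g x‖ with hdg | hgd
    · have hg0 : ‖g x‖ ≠ 0 := (hd.trans_le hdg).ne'
      simpa [M, max_eq_left hdg, hg0] using hu x
    · have hdf : d ≤ ‖f x‖ := by
        have := hdfg x
        simp only [le_max_iff] at this
        exact this.resolve_right hgd.not_ge
      apply add_ne_zero_of_norm_lt
      calc ‖((‖g x‖ ^ 2 / M x ^ 2 : ℝ) : 𝕜) * (u x - f x)‖ ≤ ‖u x - f x‖ := by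
            rw [norm_mul, RCLike.norm_ofReal, abs_of_nonneg (by positivity)]
            exact mul_le_of_le_one_left (norm_nonneg _) (hθ x)
        _ < ‖f x‖ := (huf' x).trans_le hdf

lemma exists_norm_eq_one_of_apply_eq_zero [T2Space X] {f g c₀ : C(X, 𝕜)} {x₀ : X}
    (hx₀ : g x₀ = 0) (hc₀ : ‖c₀‖ ≤ 1) (hF : ∀ x, f x + c₀ x * g x ≠ 0) :
    ∃ c : C(X, 𝕜), ‖c‖ = 1 ∧ ∀ x, f x + c x * g x ≠ 0 := by
  obtain ⟨m, hm, hmF⟩ := exists_pos_forall_le_of_forall_pos (φ := fun x => ‖f x + c₀ x * g x‖)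
    (by fun_prop) fun x => norm_pos_iff.2 (hF x)
  have hK : IsClosed {x | m / 2 ≤ ‖g x‖} := isClosed_le continuous_const (by fun_prop)
  have hx₀K : Disjoint {x | m / 2 ≤ ‖g x‖} {x₀} := by
    simpa [hx₀] using half_pos hm
  obtain ⟨ρ, hρK, hρx₀, hρ⟩ := exists_continuous_zero_one_of_isClosed hK isClosed_singleton hx₀K
  have hc₀x : ∀ x, ‖c₀ x‖ ≤ 1 := fun x => (c₀.norm_coe_le_norm x).trans hc₀
  have hc_apply : ∀ x, (c₀ + ρ • (1 - c₀)) x = c₀ x + ρ x • (1 - c₀ x) := fun x => rfl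
  refine ⟨c₀ + ρ • (1 - c₀), le_antisymm ?_ ?_, fun x => ?_⟩
  · refine (ContinuousMap.norm_le _ zero_le_one).2 fun x => ?_
    have hball := (convex_closedBall (0 : 𝕜) 1).add_smul_sub_mem
      (mem_closedBall_zero_iff.2 (hc₀x x)) (mem_closedBall_zero_iff.2 norm_one.le) (hρ x)
    rwa [mem_closedBall_zero_iff, ← hc_apply] at hball
  · calc (1 : ℝ) = ‖(c₀ + ρ • (1 - c₀)) x₀‖ := by simp [hc_apply, hρx₀ rfl]
      _ ≤ ‖c₀ + ρ • (1 - c₀)‖ := ContinuousMap.norm_coe_le_norm _ x₀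
  · have hsplit : f x + (c₀ + ρ • (1 - c₀)) x * g x
        = (f x + c₀ x * g x) + ρ x • ((1 - c₀ x) * g x) := by
      rw [hc_apply, ← smul_mul_assoc]
      ring
    rw [hsplit]
    by_cases hgx : m / 2 ≤ ‖g x‖
    · simpa [hρK hgx] using hF x
    · apply add_ne_zero_of_norm_lt
      calc ‖ρ x • ((1 - c₀ x) * g x)‖ ≤ 1 * (2 * ‖g x‖) := by
            rw [norm_smul, norm_mul, Real.norm_of_nonneg (hρ x).1]
            gcongr
            · exact (hρ x).2
            · exact (norm_sub_le _ _).trans (by linarith [norm_one (α := 𝕜), hc₀x x])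
        _ < m := by linarith
        _ ≤ ‖f x + c₀ x * g x‖ := hmF x

end

/-- For `A = C(X, 𝕜)` with `X` compact Hausdorff and `tsr A = 1` (nowhere-vanishing
functions dense): every pair `(f, g)` with no common zero is norm-one reducible. -/
theorem stmt7 (𝕜 : Type*) [RCLike 𝕜] (X : Type*) [TopologicalSpace X] [CompactSpace X]
    [T2Space X] [Nonempty X]
    (htsr : Dense {h : C(X, 𝕜) | ∀ x : X, h x ≠ 0})
    (f g : C(X, 𝕜)) (hfg : ∀ x : X, f x ≠ 0 ∨ g x ≠ 0) :
    ∃ c : C(X, 𝕜), ‖c‖ = 1 ∧ ∀ x : X, (f + c * g) x ≠ 0 := by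
  by_cases hg : ∃ x₀, g x₀ = 0
  · obtain ⟨x₀, hx₀⟩ := hg
    obtain ⟨c₀, hc₀, hF⟩ := exists_norm_le_one_forall_add_mul_ne_zero htsr hfg
    exact exists_norm_eq_one_of_apply_eq_zero hx₀ hc₀ hF
  · exact exists_norm_eq_one_forall_add_mul_ne_zero_of_forall_ne_zero htsr f
      fun x hx => hg ⟨x, hx⟩
end

section
/- Let X be a compact Hausdorff space, g ∈ C(X,𝕂) with nonempty zero set Z(g), and let f = (f₁,...,fₙ) ∈ C(X,𝕂)ⁿ be such that (f, g) has no common zero. Then there exist open sets U, W and a continuous function φ : X → [0,1] with Z(g) ⊆ W ⊆ closure(W) ⊆ Z(φ) ⊆ U, φ = 1 on X \ U, and f ≠ 0 at every point of U; consequently (f, φ) ∈ U_{n+1}(C(X,𝕂)). -/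
open Set

theorem exists_isOpen_continuous_zero_on_closure_one_off {X : Type*} [TopologicalSpace X]
    [NormalSpace X] {K U : Set X} (hK : IsClosed K) (hU : IsOpen U) (hKU : K ⊆ U) :
    ∃ (W : Set X) (φ : C(X, ℝ)), IsOpen W ∧ K ⊆ W ∧ (∀ x, φ x ∈ Icc (0 : ℝ) 1) ∧
      closure W ⊆ {x | φ x = 0} ∧ (∀ x ∉ U, φ x = 1) := by
  obtain ⟨W, hW, hKW, hWU⟩ := normal_exists_closure_subset hK hU hKU
  obtain ⟨φ, hφ0, hφ1, hφ01⟩ := exists_continuous_zero_one_of_isClosed isClosed_closure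
    hU.isClosed_compl (disjoint_compl_right_iff_subset.mpr hWU)
  exact ⟨W, φ, hW, hKW, hφ01, fun x hx => hφ0 hx, fun x hx => hφ1 hx⟩

theorem stmt12_general (𝕜 : Type*) [RCLike 𝕜] (X : Type*) [TopologicalSpace X] [CompactSpace X]
    [T2Space X] (n : ℕ) (f : Fin n → C(X, 𝕜)) (g : C(X, 𝕜))
    (hfg : ∀ x : X, g x = 0 → ∃ j, f j x ≠ 0) :
    ∃ (U W : Set X) (φ : C(X, ℝ)), IsOpen U ∧ IsOpen W ∧
      (∀ x : X, φ x ∈ Set.Icc (0 : ℝ) 1) ∧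
      {x : X | g x = 0} ⊆ W ∧
      closure W ⊆ {x : X | φ x = 0} ∧
      {x : X | φ x = 0} ⊆ U ∧
      (∀ x ∉ U, φ x = 1) ∧
      (∀ x ∈ U, ∃ j, f j x ≠ 0) ∧
      (∀ x : X, (∃ j, f j x ≠ 0) ∨ φ x ≠ 0) := by
  set U : Set X := {x | ∃ j, f j x ≠ 0}
  have hU : IsOpen U := by
    simpa only [U, ofPred_exists] using
      isOpen_iUnion fun j => isOpen_ne_fun (f j).continuous continuous_const
  obtain ⟨W, φ, hW, hZW, hφ01, hWφ, hφ_one⟩ := exists_isOpen_continuous_zero_on_closure_one_off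
    (isClosed_eq g.continuous continuous_const) hU hfg
  have hzero_sub : {x | φ x = 0} ⊆ U := fun x hx =>
    by_contra fun hxU => one_ne_zero ((hφ_one x hxU).symm.trans hx)
  refine ⟨U, W, φ, hU, hW, hφ01, hZW, hWφ, hzero_sub, hφ_one, fun _ hx => hx, fun x =>
    or_iff_not_imp_right.mpr fun hx => hzero_sub (not_not.mp hx)⟩

/-- Let `g ∈ C(X, 𝕜)` have nonempty zero set and let `(f, g)` have no common zero. Then
there are open sets `U, W` and a continuous `φ : X → [0,1]` with
`Z(g) ⊆ W ⊆ closure W ⊆ Z(φ) ⊆ U`, `φ = 1` off `U`, and `f ≠ 0` on `U`; consequently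
`(f, φ)` is an invertible `(n+1)`-tuple. -/
theorem stmt12 (𝕜 : Type*) [RCLike 𝕜] (X : Type*) [TopologicalSpace X] [CompactSpace X]
    [T2Space X] (n : ℕ) (f : Fin n → C(X, 𝕜)) (g : C(X, 𝕜))
    (hZ : ∃ x : X, g x = 0)
    (hfg : ∀ x : X, g x = 0 → ∃ j, f j x ≠ 0) :
    ∃ (U W : Set X) (φ : C(X, ℝ)), IsOpen U ∧ IsOpen W ∧
      (∀ x : X, φ x ∈ Set.Icc (0 : ℝ) 1) ∧
      {x : X | g x = 0} ⊆ W ∧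
      closure W ⊆ {x : X | φ x = 0} ∧
      {x : X | φ x = 0} ⊆ U ∧
      (∀ x ∉ U, φ x = 1) ∧
      (∀ x ∈ U, ∃ j, f j x ≠ 0) ∧
      (∀ x : X, (∃ j, f j x ≠ 0) ∨ φ x ≠ 0) :=
  stmt12_general 𝕜 X n f g hfg
end

section
/- Let X be a compact Hausdorff space and A = C(X, 𝕂) with 𝕂 = ℝ or ℂ. If for a pair (f,g) with no common zero there exists a ∈ A with ‖a‖_∞ < 1/2 such that u := f + a g has no zero, and if Z(g) ≠ ∅, then there exists φa-scaled function c ∈ A with ‖c‖_∞ = 1 such that f + c·g has no zero on X. -/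
/-!
Let `u = f + a g` and let `δ > 0` be the minimum of `‖u‖`. Cut `a` off towards the constant `1`
near `Z(g)`: `c = a + r (1 - a)`, where `r = max 0 (1 - 2‖g‖/δ)` takes values in `[0, 1]`, equals
`1` on `Z(g)` and vanishes where `‖g‖ ≥ δ/2`. Pointwise `c` is a convex combination of `a` and `1`,
so `‖c‖ ≤ 1`, with equality at a zero of `g`. Finally `f + c g = u + r (1 - a) g`, and
`‖r (1 - a) g‖ ≤ 2 r ‖g‖ < δ ≤ ‖u‖`, so `f + c g` has no zero.
-/

theorem ContinuousMap.exists_pos_le_norm {X E : Type*} [TopologicalSpace X] [CompactSpace X]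
    [NormedAddCommGroup E] (u : C(X, E)) (hu : ∀ x, u x ≠ 0) : ∃ δ > 0, ∀ x, δ ≤ ‖u x‖ := by
  rcases isEmpty_or_nonempty X with hX | ⟨⟨x₀⟩⟩
  · exact ⟨1, one_pos, isEmptyElim⟩
  obtain ⟨xm, -, hxm⟩ := isCompact_univ.exists_isMinOn ⟨x₀, trivial⟩
    (continuous_norm.comp u.continuous).continuousOn
  exact ⟨‖u xm‖, norm_pos_iff.mpr (hu xm), fun x => hxm (Set.mem_univ x)⟩

noncomputable def cutoff (ρ t : ℝ) : ℝ := max 0 (1 - t / ρ)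

@[fun_prop]
theorem continuous_cutoff (ρ : ℝ) : Continuous (cutoff ρ) := by
  unfold cutoff; fun_prop

@[simp]
theorem cutoff_zero (ρ : ℝ) : cutoff ρ 0 = 1 := by simp [cutoff]

theorem cutoff_nonneg (ρ t : ℝ) : 0 ≤ cutoff ρ t := le_max_left _ _

theorem cutoff_le_one {ρ t : ℝ} (hρ : 0 ≤ ρ) (ht : 0 ≤ t) : cutoff ρ t ≤ 1 :=
  max_le zero_le_one (by linarith [div_nonneg ht hρ])

theorem cutoff_mul_lt {ρ t : ℝ} (hρ : 0 < ρ) (ht : 0 ≤ t) : cutoff ρ t * t < ρ := by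
  rcases lt_or_ge t ρ with htρ | htρ
  · calc cutoff ρ t * t ≤ 1 * t := by gcongr; exact cutoff_le_one hρ.le ht
      _ < ρ := by linarith
  · have : 1 - t / ρ ≤ 0 := by rw [sub_nonpos, one_le_div hρ]; exact htρ
    simpa [cutoff, max_eq_left this] using hρ

section RCLike

variable {𝕜 : Type*} [RCLike 𝕜]

theorem norm_add_ofReal_mul_one_sub_le_one {a : 𝕜} (ha : ‖a‖ ≤ 1) {t : ℝ} (ht₀ : 0 ≤ t)
    (ht₁ : t ≤ 1) : ‖a + t * (1 - a)‖ ≤ 1 := by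
  have h1t : ‖(1 : 𝕜) - t‖ = 1 - t := by
    rw [← RCLike.ofReal_one, ← RCLike.ofReal_sub, RCLike.norm_ofReal, abs_of_nonneg (by linarith)]
  calc ‖a + t * (1 - a)‖ = ‖(1 - t) * a + t‖ := by ring_nf
    _ ≤ ‖(1 - t : 𝕜) * a‖ + ‖(t : 𝕜)‖ := norm_add_le _ _
    _ = (1 - t) * ‖a‖ + t := by rw [norm_mul, h1t, RCLike.norm_ofReal, abs_of_nonneg ht₀]
    _ ≤ 1 := by nlinarith

theorem add_add_ofReal_mul_one_sub_mul_ne_zero {f g a : 𝕜} {t δ : ℝ} (ha : ‖a‖ ≤ 1)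
    (hu : δ ≤ ‖f + a * g‖) (ht : 0 ≤ t) (htg : 2 * (t * ‖g‖) < δ) :
    f + (a + t * (1 - a)) * g ≠ 0 := by
  have h1a : ‖(1 : 𝕜) - a‖ ≤ 2 := by
    linarith [norm_sub_le (1 : 𝕜) a, norm_one (α := 𝕜)]
  have hsmall : ‖(t : 𝕜) * (1 - a) * g‖ < ‖f + a * g‖ :=
    calc ‖(t : 𝕜) * (1 - a) * g‖ = ‖(1 : 𝕜) - a‖ * (t * ‖g‖) := by
          rw [norm_mul, norm_mul, RCLike.norm_ofReal, abs_of_nonneg ht]; ring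
      _ ≤ 2 * (t * ‖g‖) := by gcongr
      _ < ‖f + a * g‖ := htg.trans_le hu
  have hsplit : f + (a + t * (1 - a)) * g = (f + a * g) + (t : 𝕜) * (1 - a) * g := by ring
  rw [hsplit]
  intro h
  rw [eq_neg_of_add_eq_zero_left h, norm_neg] at hsmall
  exact lt_irrefl _ hsmall

end RCLike

theorem stmt13_general (𝕜 : Type*) [RCLike 𝕜] (X : Type*) [TopologicalSpace X] [CompactSpace X]
    (f g : C(X, 𝕜))
    (ha : ∃ a : C(X, 𝕜), ‖a‖ < 1 / 2 ∧ ∀ x : X, f x + a x * g x ≠ 0)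
    (hZ : ∃ x : X, g x = 0) :
    ∃ c : C(X, 𝕜), ‖c‖ = 1 ∧ ∀ x : X, f x + c x * g x ≠ 0 := by
  obtain ⟨a, ha, hu⟩ := ha
  obtain ⟨x₀, hx₀⟩ := hZ
  obtain ⟨δ, hδ, hδu⟩ := (f + a * g).exists_pos_le_norm hu
  have hρ : 0 < δ / 2 := half_pos hδ
  have hax (x : X) : ‖a x‖ ≤ 1 := by linarith [a.norm_coe_le_norm x]
  let r : C(X, 𝕜) := ⟨fun x => (cutoff (δ / 2) ‖g x‖ : 𝕜), by fun_prop⟩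
  let c : C(X, 𝕜) := a + r * (1 - a)
  refine ⟨c, le_antisymm ?_ ?_, fun x => ?_⟩
  · refine (c.norm_le zero_le_one).mpr fun x => ?_
    exact norm_add_ofReal_mul_one_sub_le_one (hax x) (cutoff_nonneg _ _)
      (cutoff_le_one hρ.le (norm_nonneg _))
  · have hc₀ : c x₀ = 1 := by simp [c, r, hx₀]
    simpa [hc₀] using c.norm_coe_le_norm x₀
  · refine add_add_ofReal_mul_one_sub_mul_ne_zero (hax x) (hδu x) (cutoff_nonneg _ _) ?_
    linarith [cutoff_mul_lt hρ (norm_nonneg (g x))]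

/-- If the pair `(f, g)` in `C(X, 𝕜)` has no common zero, some `a` with `‖a‖_∞ < 1/2` makes
`f + a·g` zero-free, and `Z(g) ≠ ∅`, then there is `c` with `‖c‖_∞ = 1` such that `f + c·g`
has no zero on `X` (i.e. `(f, g)` is norm-one reducible). -/
theorem stmt13 (𝕜 : Type*) [RCLike 𝕜] (X : Type*) [TopologicalSpace X] [CompactSpace X]
    [T2Space X] (f g : C(X, 𝕜))
    (hfg : ∀ x : X, f x ≠ 0 ∨ g x ≠ 0)
    (ha : ∃ a : C(X, 𝕜), ‖a‖ < 1 / 2 ∧ ∀ x : X, f x + a x * g x ≠ 0)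
    (hZ : ∃ x : X, g x = 0) :
    ∃ c : C(X, 𝕜), ‖c‖ = 1 ∧ ∀ x : X, f x + c x * g x ≠ 0 :=
  stmt13_general 𝕜 X f g ha hZ
end

section
/- Let R be a commutative unital ring, (f₁,...,fₘ,g) ∈ U_{m+1}(R) with m ≥ n+1, and write h = r + c·g where r lies in the ideal generated by fₙ₊₁+g, ..., fₘ+g and c ∈ R. If (x₁,...,xₙ) ∈ Rⁿ satisfies (f₁ + x₁h, ..., fₙ + xₙh) ∈ U_n(R), then (f₁ + x₁c·g, ..., fₙ + xₙc·g, fₙ₊₁ + g, ..., fₘ + g) ∈ U_m(R). -/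
open Finset

theorem Finset.sum_mul_add_mul_add {R ι : Type*} [CommRing R] (s : Finset ι)
    (y f x : ι → R) (a b : R) :
    ∑ j ∈ s, y j * (f j + x j * (a + b)) =
      ∑ j ∈ s, y j * (f j + x j * b) + (∑ j ∈ s, y j * x j) * a := by
  rw [sum_mul, ← sum_add_distrib]
  exact sum_congr rfl fun j _ => by ring

theorem stmt16_general (R : Type*) [CommRing R] (n k : ℕ)
    (f : Fin n → R) (F : Fin k → R) (g : R)
    (r c h : R)
    (hr : r ∈ Ideal.span (Set.range fun i : Fin k => F i + g))
    (hh : h = r + c * g)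
    (x : Fin n → R)
    (hx : ∃ y : Fin n → R, ∑ j, y j * (f j + x j * h) = 1) :
    ∃ (p : Fin n → R) (q : Fin k → R),
      ∑ j, p j * (f j + x j * (c * g)) + ∑ i, q i * (F i + g) = 1 := by
  obtain ⟨y, hy⟩ := hx
  obtain ⟨z, hz⟩ := Ideal.mem_span_range_iff_exists_fun.mp hr
  refine ⟨y, fun i => (∑ j, y j * x j) * z i, ?_⟩
  have hq : ∑ i, (∑ j, y j * x j) * z i * (F i + g) = (∑ j, y j * x j) * r := by
    simp only [← hz, mul_sum, mul_assoc]
  rw [hq, ← sum_mul_add_mul_add, ← hh, hy]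

/-- Let `(f₁,…,fₙ, F₁,…,F_k, g)` be an invertible `(m+1)`-tuple (`m = n + k`, `k ≥ 1`), and
write `h = r + c·g` with `r` in the ideal generated by `F₁+g, …, F_k+g`. If
`(f₁ + x₁ h, …, fₙ + xₙ h)` is invertible, then
`(f₁ + x₁ c g, …, fₙ + xₙ c g, F₁ + g, …, F_k + g)` is an invertible `m`-tuple. -/
theorem stmt16 (R : Type*) [CommRing R] (n k : ℕ) (hk : 1 ≤ k)
    (f : Fin n → R) (F : Fin k → R) (g : R)
    (hfg : ∃ (x : Fin n → R) (z : Fin k → R) (y : R),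
      ∑ j, x j * f j + ∑ i, z i * F i + y * g = 1)
    (r c h : R)
    (hr : r ∈ Ideal.span (Set.range fun i : Fin k => F i + g))
    (hh : h = r + c * g)
    (x : Fin n → R)
    (hx : ∃ y : Fin n → R, ∑ j, y j * (f j + x j * h) = 1) :
    ∃ (p : Fin n → R) (q : Fin k → R),
      ∑ j, p j * (f j + x j * (c * g)) + ∑ i, q i * (F i + g) = 1 :=
  stmt16_general R n k f F g r c h hr hh x hx
end

section
/- Let A be a commutative unital Banach algebra whose group of invertibles is dense (tsr A = 1). Then A has the unit-1-stable rank: for every pair (a,b) ∈ A² with aA + bA = A there exist invertible u, v ∈ A⁻¹ with u a + v b = 1. -/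
/-!
Perturb a Bézout pair `x a + y b = 1` to a pair of invertibles `u, v`: since the units of a
Banach algebra form an open set and `(u, v) ↦ u a + v b` is continuous, `u a + v b` stays
invertible for `(u, v)` close to `(x, y)`, and density of the units supplies such `u, v`.
Dividing by `t = u a + v b` then gives `t⁻¹ u a + t⁻¹ v b = 1`.
-/

theorem exists_isUnit_mul_add_mul_eq_one_of_isUnit {R : Type*} [Ring R] {a b u v : R}
    (hu : IsUnit u) (hv : IsUnit v) (huv : IsUnit (u * a + v * b)) :
    ∃ u' v' : R, IsUnit u' ∧ IsUnit v' ∧ u' * a + v' * b = 1 := by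
  obtain ⟨t, ht⟩ := huv
  refine ⟨↑t⁻¹ * u, ↑t⁻¹ * v, t⁻¹.isUnit.mul hu, t⁻¹.isUnit.mul hv, ?_⟩
  rw [mul_assoc, mul_assoc, ← mul_add, ← ht, Units.inv_mul]

theorem exists_isUnit_isUnit_mul_add_mul_isUnit {R : Type*} [NormedRing R]
    [HasSummableGeomSeries R] (hdense : Dense {a : R | IsUnit a}) {a b x y : R}
    (h : x * a + y * b = 1) :
    ∃ u v : R, IsUnit u ∧ IsUnit v ∧ IsUnit (u * a + v * b) := by
  let U : Set (R × R) := (fun p => p.1 * a + p.2 * b) ⁻¹' {z | IsUnit z}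
  have hU : IsOpen U := Units.isOpen.preimage (by fun_prop)
  have hxy : (x, y) ∈ U := by simp [U, h]
  obtain ⟨⟨u, v⟩, ⟨hu, hv⟩, huv⟩ := (hdense.prod hdense).exists_mem_open hU ⟨_, hxy⟩
  exact ⟨u, v, hu, hv, huv⟩

theorem stmt17_general (A : Type*) [NormedCommRing A]
    [CompleteSpace A]
    (htsr : Dense {a : A | IsUnit a}) :
    ∀ a b : A, (∃ x y : A, x * a + y * b = 1) →
      ∃ u v : A, IsUnit u ∧ IsUnit v ∧ u * a + v * b = 1 := by
  rintro a b ⟨x, y, hxy⟩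
  obtain ⟨u, v, hu, hv, huv⟩ := exists_isUnit_isUnit_mul_add_mul_isUnit htsr hxy
  exact exists_isUnit_mul_add_mul_eq_one_of_isUnit hu hv huv

/-- A commutative unital Banach algebra with dense group of invertibles (`tsr A = 1`) has
the unit-1-stable rank: every invertible pair `(a, b)` is totally reducible. -/
theorem stmt17 (𝕜 : Type*) [RCLike 𝕜] (A : Type*) [NormedCommRing A] [NormedAlgebra 𝕜 A]
    [CompleteSpace A]
    (htsr : Dense {a : A | IsUnit a}) :
    ∀ a b : A, (∃ x y : A, x * a + y * b = 1) →
      ∃ u v : A, IsUnit u ∧ IsUnit v ∧ u * a + v * b = 1 :=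
  stmt17_general A htsr
end

section
/- Let X be a compact Hausdorff space, f = (f₁,...,fₙ) and g in C(X,𝕂) with Z(g) ≠ ∅ and |f| > δ > 0 on Z(g) (pointwise Euclidean norm). Let y ∈ C(X,𝕂)ⁿ with |y_j| ≤ 1/2 pointwise and u := f + y·g nowhere jointly vanishing. Let V be open with Z(g) ⊆ V and |g| < δ/(2√n), |f| > δ on closure(V), and let ψ : X → [0,1] be continuous with ψ = 0 off V and ψ = 1 on an open set U ⊇ Z(g). Define v_j := ψ + y_j(1 − ψ). Then ‖v_j‖_∞ ≤ 1 for each j, and the tuple f + v·g has no common zero on X: indeed |f + v·g| = |u| > 0 on X \ V and |f + v·g| ≥ δ/2 on V. -/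
/-!
Each `v_j = ψ + y_j (1 - ψ)` is a convex combination of `1` and `y_j`, so `‖v_j‖ ≤ 1`. Hence on
`V` the perturbation `v·g` has Euclidean norm at most `√n ‖g‖ < δ/2`, and the reverse triangle
inequality gives `|f + v·g| ≥ |f| - δ/2 > δ/2`. Off `V` we have `ψ = 0`, so `v = y` there.
-/

open Finset

theorem RCLike.norm_ofReal_add_mul_one_sub_le_one {𝕜 : Type*} [RCLike 𝕜] {t : ℝ}
    (ht : t ∈ Set.Icc (0 : ℝ) 1) {z : 𝕜} (hz : ‖z‖ ≤ 1) : ‖(t : 𝕜) + z * (1 - t)‖ ≤ 1 := by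
  obtain ⟨ht0, ht1⟩ := ht
  calc ‖(t : 𝕜) + z * (1 - t)‖ ≤ ‖(t : 𝕜)‖ + ‖z‖ * ‖((1 - t : ℝ) : 𝕜)‖ := by
        rw [← norm_mul, ofReal_sub, ofReal_one]
        exact norm_add_le _ _
    _ = t + ‖z‖ * (1 - t) := by
        rw [norm_ofReal, norm_ofReal, abs_of_nonneg ht0, abs_of_nonneg (sub_nonneg.2 ht1)]
    _ ≤ t + 1 * (1 - t) := by gcongr
    _ = 1 := by ring

theorem EuclideanSpace.norm_le_sqrt_card_mul {𝕜 ι : Type*} [RCLike 𝕜] [Fintype ι]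
    (b : EuclideanSpace 𝕜 ι) {c : ℝ} (hc : 0 ≤ c) (hb : ∀ i, ‖b i‖ ≤ c) :
    ‖b‖ ≤ √(Fintype.card ι) * c :=
  calc ‖b‖ = √(∑ i, ‖b i‖ ^ 2) := EuclideanSpace.norm_eq b
    _ ≤ √(∑ _ : ι, c ^ 2) := by gcongr with i; exact hb i
    _ = √(Fintype.card ι) * c := by
        rw [sum_const, card_univ, nsmul_eq_mul, Real.sqrt_mul (Nat.cast_nonneg _),
          Real.sqrt_sq hc]

theorem half_lt_sqrt_sum_norm_add_mul_sq {𝕜 ι : Type*} [RCLike 𝕜] [Fintype ι]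
    (a v : ι → 𝕜) (c : 𝕜) {δ : ℝ} (hv : ∀ i, ‖v i‖ ≤ 1) (ha : δ < √(∑ i, ‖a i‖ ^ 2))
    (hc : ‖c‖ < δ / (2 * √(Fintype.card ι))) :
    δ / 2 < √(∑ i, ‖a i + v i * c‖ ^ 2) := by
  let A : EuclideanSpace 𝕜 ι := WithLp.toLp 2 a
  let B : EuclideanSpace 𝕜 ι := WithLp.toLp 2 fun i ↦ v i * c
  have hcard : 0 < √(Fintype.card ι) := by
    refine (Real.sqrt_nonneg _).lt_of_ne fun h ↦ ?_
    rw [← h, mul_zero, div_zero] at hc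
    exact (norm_nonneg c).not_gt hc
  have hB : ‖B‖ < δ / 2 :=
    calc ‖B‖ ≤ √(Fintype.card ι) * ‖c‖ :=
          EuclideanSpace.norm_le_sqrt_card_mul B (norm_nonneg c) fun i ↦ by
            simpa [B, norm_mul] using mul_le_of_le_one_left (norm_nonneg c) (hv i)
      _ < √(Fintype.card ι) * (δ / (2 * √(Fintype.card ι))) := by gcongr
      _ = δ / 2 := by field_simp
  have hA : ‖A‖ = √(∑ i, ‖a i‖ ^ 2) := EuclideanSpace.norm_eq A
  have hAB : ‖A + B‖ = √(∑ i, ‖a i + v i * c‖ ^ 2) := EuclideanSpace.norm_eq (A + B)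
  linarith [norm_sub_le_norm_add A B]

theorem exists_ne_zero_of_sqrt_sum_norm_sq_pos {ι E : Type*} [Fintype ι] [SeminormedAddGroup E]
    (a : ι → E) (h : 0 < √(∑ i, ‖a i‖ ^ 2)) : ∃ i, a i ≠ 0 := by
  by_contra! h0
  simp [h0] at h

theorem stmt18_general (𝕜 : Type*) [RCLike 𝕜] (X : Type*) [TopologicalSpace X] (n : ℕ)
    (f y : Fin n → C(X, 𝕜)) (g : C(X, 𝕜)) (δ : ℝ) (hδ : 0 < δ)
    (hy : ∀ (j : Fin n) (x : X), ‖y j x‖ ≤ 1 / 2)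
    (hu : ∀ x : X, ∃ j, f j x + y j x * g x ≠ 0)
    (V : Set X)
    (hgV : ∀ x ∈ closure V, ‖g x‖ < δ / (2 * Real.sqrt n))
    (hfV : ∀ x ∈ closure V, δ < Real.sqrt (∑ j, ‖f j x‖ ^ 2))
    (ψ : C(X, ℝ)) (hψ01 : ∀ x : X, ψ x ∈ Set.Icc (0 : ℝ) 1)
    (hψ0 : ∀ x ∉ V, ψ x = 0) :
    (∀ (j : Fin n) (x : X), ‖((ψ x : 𝕜) + y j x * (1 - (ψ x : 𝕜)))‖ ≤ 1) ∧
    (∀ x ∉ V,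
      Real.sqrt (∑ j, ‖f j x + ((ψ x : 𝕜) + y j x * (1 - (ψ x : 𝕜))) * g x‖ ^ 2) =
      Real.sqrt (∑ j, ‖f j x + y j x * g x‖ ^ 2)) ∧
    (∀ x ∈ V,
      δ / 2 ≤ Real.sqrt (∑ j, ‖f j x + ((ψ x : 𝕜) + y j x * (1 - (ψ x : 𝕜))) * g x‖ ^ 2)) ∧
    (∀ x : X, ∃ j, f j x + ((ψ x : 𝕜) + y j x * (1 - (ψ x : 𝕜))) * g x ≠ 0) := by
  have hv (j : Fin n) (x : X) : ‖(ψ x : 𝕜) + y j x * (1 - (ψ x : 𝕜))‖ ≤ 1 :=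
    RCLike.norm_ofReal_add_mul_one_sub_le_one (hψ01 x) ((hy j x).trans (by norm_num))
  have hoff : ∀ x ∉ V,
      √(∑ j, ‖f j x + ((ψ x : 𝕜) + y j x * (1 - (ψ x : 𝕜))) * g x‖ ^ 2) =
      √(∑ j, ‖f j x + y j x * g x‖ ^ 2) := fun x hx ↦ by
    simp [hψ0 x hx]
  have hon : ∀ x ∈ V,
      δ / 2 ≤ √(∑ j, ‖f j x + ((ψ x : 𝕜) + y j x * (1 - (ψ x : 𝕜))) * g x‖ ^ 2) :=
    fun x hx ↦ by
      have hx' := subset_closure hx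
      refine (half_lt_sqrt_sum_norm_add_mul_sq _ _ _ (hv · x) (hfV x hx') ?_).le
      simpa using hgV x hx'
  refine ⟨hv, hoff, hon, fun x ↦ ?_⟩
  by_cases hx : x ∈ V
  · exact exists_ne_zero_of_sqrt_sum_norm_sq_pos _ ((half_pos hδ).trans_le (hon x hx))
  · simpa [hψ0 x hx] using hu x

/-- The key construction for the norm-one rank of `C(X, 𝕜)`: with `|f| > δ` near `Z(g)`,
`|y_j| ≤ 1/2`, `u := f + y·g` nowhere jointly vanishing, `V ⊇ Z(g)` open with `|g| < δ/(2√n)`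
and `|f| > δ` on its closure, and `ψ` a Urysohn function (`ψ = 0` off `V`, `ψ = 1` on an open
`U ⊇ Z(g)`), the functions `v_j := ψ + y_j (1 − ψ)` satisfy `‖v_j‖_∞ ≤ 1`, and `f + v·g`
has pointwise Euclidean norm equal to `|u|` off `V` and at least `δ/2` on `V`; in particular
it has no common zero. -/
theorem stmt18 (𝕜 : Type*) [RCLike 𝕜] (X : Type*) [TopologicalSpace X] [CompactSpace X]
    [T2Space X] (n : ℕ)
    (f y : Fin n → C(X, 𝕜)) (g : C(X, 𝕜)) (δ : ℝ) (hδ : 0 < δ)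
    (hZ : ∃ x : X, g x = 0)
    (hfZ : ∀ x : X, g x = 0 → δ < Real.sqrt (∑ j, ‖f j x‖ ^ 2))
    (hy : ∀ (j : Fin n) (x : X), ‖y j x‖ ≤ 1 / 2)
    (hu : ∀ x : X, ∃ j, f j x + y j x * g x ≠ 0)
    (V : Set X) (hV : IsOpen V) (hZV : {x : X | g x = 0} ⊆ V)
    (hgV : ∀ x ∈ closure V, ‖g x‖ < δ / (2 * Real.sqrt n))
    (hfV : ∀ x ∈ closure V, δ < Real.sqrt (∑ j, ‖f j x‖ ^ 2))
    (ψ : C(X, ℝ)) (hψ01 : ∀ x : X, ψ x ∈ Set.Icc (0 : ℝ) 1)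
    (hψ0 : ∀ x ∉ V, ψ x = 0)
    (U : Set X) (hU : IsOpen U) (hZU : {x : X | g x = 0} ⊆ U)
    (hψ1 : ∀ x ∈ U, ψ x = 1) :
    (∀ (j : Fin n) (x : X), ‖((ψ x : 𝕜) + y j x * (1 - (ψ x : 𝕜)))‖ ≤ 1) ∧
    (∀ x ∉ V,
      Real.sqrt (∑ j, ‖f j x + ((ψ x : 𝕜) + y j x * (1 - (ψ x : 𝕜))) * g x‖ ^ 2) =
      Real.sqrt (∑ j, ‖f j x + y j x * g x‖ ^ 2)) ∧
    (∀ x ∈ V,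
      δ / 2 ≤ Real.sqrt (∑ j, ‖f j x + ((ψ x : 𝕜) + y j x * (1 - (ψ x : 𝕜))) * g x‖ ^ 2)) ∧
    (∀ x : X, ∃ j, f j x + ((ψ x : 𝕜) + y j x * (1 - (ψ x : 𝕜))) * g x ≠ 0) :=
  stmt18_general 𝕜 X n f y g δ hδ hy hu V hgV hfV ψ hψ01 hψ0
end

section
/- Let X be compact Hausdorff, A = C(X,𝕂), and (f,g) ∈ U_{n+1}(A) with g invertible (Z(g) = ∅). If tsr A ≤ n, then for every ε > 0 there exists y ∈ Aⁿ with ‖y_j‖_∞ ≤ ε such that f + y·g ∈ U_n(A). -/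
/-!
Right multiplication by a unit `u` is invertible, so a point `v` of the dense set close to `f`
is reached as `f + y * u` with `y = (v - f) * u⁻¹`, and `‖y‖ ≤ ‖v - f‖ ‖u⁻¹‖` is as small as
we like.
-/

theorem Dense.exists_norm_lt_add_mul_unit_mem {A ι : Type*} [SeminormedRing A] [Fintype ι]
    {S : Set (ι → A)} (hS : Dense S) (f : ι → A) (u : Aˣ) {ε : ℝ} (hε : 0 < ε) :
    ∃ y : ι → A, (∀ j, ‖y j‖ < ε) ∧ (fun j => f j + y j * u) ∈ S := by
  set M := ‖(↑u⁻¹ : A)‖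
  have hM : 0 ≤ M := norm_nonneg _
  have hδ : 0 < ε / (M + 1) := by positivity
  obtain ⟨v, hvf, hvS⟩ := Metric.dense_iff.mp hS f _ hδ
  refine ⟨fun j => (v j - f j) * ↑u⁻¹, fun j => ?_, ?_⟩
  · have hvj : ‖v j - f j‖ < ε / (M + 1) :=
      (dist_eq_norm (v j) (f j) ▸ dist_le_pi_dist v f j).trans_lt (Metric.mem_ball.mp hvf)
    calc ‖(v j - f j) * ↑u⁻¹‖ ≤ ‖v j - f j‖ * M := norm_mul_le _ _
      _ ≤ ε / (M + 1) * M := by gcongr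
      _ < ε / (M + 1) * (M + 1) := by gcongr; linarith
      _ = ε := div_mul_cancel₀ ε (by positivity)
  · simpa only [Units.inv_mul_cancel_right, add_sub_cancel] using hvS

theorem stmt19_general (𝕜 : Type*) [RCLike 𝕜] (X : Type*) [TopologicalSpace X] [CompactSpace X]
    (n : ℕ)
    (htsr : Dense {f : Fin n → C(X, 𝕜) | ∀ x : X, ∃ j, f j x ≠ 0})
    (f : Fin n → C(X, 𝕜)) (g : C(X, 𝕜))
    (hg : ∀ x : X, g x ≠ 0)
    (ε : ℝ) (hε : 0 < ε) :
    ∃ y : Fin n → C(X, 𝕜), (∀ j, ‖y j‖ ≤ ε) ∧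
      ∀ x : X, ∃ j, (f j + y j * g) x ≠ 0 := by
  have hu : IsUnit g := g.isUnit_iff_forall_ne_zero.mpr hg
  obtain ⟨y, hy, hyS⟩ := htsr.exists_norm_lt_add_mul_unit_mem f hu.unit hε
  rw [hu.unit_spec] at hyS
  exact ⟨y, fun j => (hy j).le, hyS⟩

/-- For `A = C(X, 𝕜)`, `X` compact Hausdorff: if `(f, g)` is an invertible `(n+1)`-tuple
with `g` invertible (`Z(g) = ∅`) and `tsr A ≤ n` (invertible `n`-tuples dense), then for
every `ε > 0` there is `y ∈ Aⁿ` with `‖y_j‖_∞ ≤ ε` such that `f + y·g` has no common zero. -/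
theorem stmt19 (𝕜 : Type*) [RCLike 𝕜] (X : Type*) [TopologicalSpace X] [CompactSpace X]
    [T2Space X] (n : ℕ)
    (htsr : Dense {f : Fin n → C(X, 𝕜) | ∀ x : X, ∃ j, f j x ≠ 0})
    (f : Fin n → C(X, 𝕜)) (g : C(X, 𝕜))
    (hg : ∀ x : X, g x ≠ 0)
    (hfg : ∀ x : X, (∃ j, f j x ≠ 0) ∨ g x ≠ 0)
    (ε : ℝ) (hε : 0 < ε) :
    ∃ y : Fin n → C(X, 𝕜), (∀ j, ‖y j‖ ≤ ε) ∧
      ∀ x : X, ∃ j, (f j + y j * g) x ≠ 0 :=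
  stmt19_general 𝕜 X n htsr f g hg ε hε
end
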